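/- Let ℬ₁, ℬ₂ be asymptotic gauges on the same set of indices 𝕀 and μ:ℝ→ℝ_{≥0} non-decreasing with lim_{x→+∞}μ(x)=+∞ and μ(b)² <_𝕀 μ(c) for some c∈ℬᵢ whenever b∈ℬᵢ. If ℝ_M(ℬ₁) ⊆ ℝ_M(ℬ₂), then ℝ_M(μ(ℬ₁)) ⊆ ℝ_M(μ(ℬ₂)). -/

import Mathlib

/-- A set of indices `𝕀 = (I, ≤, 𝓘)`. -/
structure SoI (I : Type) where
  le : I → I → Prop
  refl : ∀ a, le a a
  trans : ∀ a b c, le a b → le b c → le a c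
  sets : Set (Set I)
  empty_not_mem : ∅ ∉ sets
  univ_mem : Set.univ ∈ sets
  inter : ∀ A ∈ sets, ∀ B ∈ sets, ∃ C ∈ sets, C ⊆ A ∩ B
  directed : ∀ (e a : I), ∀ A ∈ sets, a ∈ A → le e a →
    (∃ x, x ∈ A ∧ le x e) ∧
    ∀ b c : I, b ∈ A → le b e → c ∈ A → le c e →
      ∃ d, d ∈ A ∧ le d e ∧ (le d b ∧ d ≠ b) ∧ (le d c ∧ d ≠ c)

/-- `A_{≤ a}` -/
def SoI.down {I : Type} (S : SoI I) (A : Set I) (a : I) : Set I :=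
  {ε | ε ∈ A ∧ S.le ε a}

/-- `f : A_{≤a} → B_{≤b}` is infinitesimal. -/
def Infinitesimal {I₁ I₂ : Type} (S₁ : SoI I₁) (S₂ : SoI I₂) (f : I₂ → I₁)
    (A : Set I₁) (a : I₁) (B : Set I₂) (b : I₂) : Prop :=
  ∀ α ∈ S₁.down A a, ∃ e ∈ S₂.down B b, ∀ ε₂ ∈ S₂.down B e, f ε₂ ∈ S₁.down A α

/-- `f : 𝕀₁ → 𝕀₂` is a morphism of sets of indices. -/
def IsMorphism {I₁ I₂ : Type} (S₁ : SoI I₁) (S₂ : SoI I₂) (f : I₂ → I₁) : Prop :=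
  ∀ A ∈ S₁.sets, ∀ a ∈ A, ∃ B ∈ S₂.sets, ∀ b ∈ B, Infinitesimal S₁ S₂ f A a B b

/-- `P ε` holds for `ε` sufficiently small in `A_{≤a}`. -/
def EvSmallOn {I : Type} (S : SoI I) (A : Set I) (a : I) (P : I → Prop) : Prop :=
  ∃ e ∈ S.down A a, ∀ ε ∈ S.down A e, P ε

/-- `P ε` holds for `ε` sufficiently small in `𝕀`. -/
def EvSmall {I : Type} (S : SoI I) (P : I → Prop) : Prop :=
  ∃ A ∈ S.sets, ∀ a ∈ A, EvSmallOn S A a P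

/-- `i >_𝕀 j`. -/
def NetGt {I : Type} (S : SoI I) (i j : I → ℝ) : Prop :=
  EvSmall S fun ε => i ε > j ε

/-- `x_ε = O_{a,A}(y_ε)`. -/
def BigOOn {I : Type} (S : SoI I) (A : Set I) (a : I) (x y : I → ℝ) : Prop :=
  ∃ H : ℝ, 0 < H ∧ ∃ ε₀ ∈ S.down A a, ∀ ε ∈ S.down A ε₀, |x ε| ≤ H * |y ε|

/-- `x_ε = O(y_ε)` as `ε ∈ 𝕀`. -/
def BigO {I : Type} (S : SoI I) (x y : I → ℝ) : Prop :=
  ∃ A ∈ S.sets, ∀ a ∈ A, BigOOn S A a x y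

/-- `lim_𝕀 i = +∞`. -/
def LimTop {I : Type} (S : SoI I) (i : I → ℝ) : Prop :=
  ∃ A ∈ S.sets, ∀ a ∈ A, ∀ M : ℝ, ∃ e, S.le e a ∧ ∀ ε ∈ A, S.le ε e → M < i ε

/-- `ℬ` is an asymptotic gauge on `𝕀`. -/
def IsAG {I : Type} (S : SoI I) (B : Set (I → ℝ)) : Prop :=
  (∃ i ∈ B, LimTop S i) ∧
  (∀ i ∈ B, ∀ j ∈ B, ∃ p ∈ B, BigO S (fun ε => i ε * j ε) p) ∧
  (∀ i ∈ B, ∀ r : ℝ, ∃ σ ∈ B, BigO S (fun ε => r * i ε) σ) ∧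
  (∀ i ∈ B, ∀ j ∈ B, ∃ s ∈ B, NetGt S s (fun _ => 0) ∧
    BigO S (fun ε => |i ε| + |j ε|) s)

/-- The moderate nets `ℝ_M(ℬ)`. -/
def RM {I : Type} (S : SoI I) (B : Set (I → ℝ)) : Set (I → ℝ) :=
  {x | ∃ b ∈ B, BigO S x b}

/-- `ℬ ∘ f = {b ∘ f ∣ b ∈ ℬ}`. -/
def compAG {I₁ I₂ : Type} (B : Set (I₁ → ℝ)) (f : I₂ → I₁) : Set (I₂ → ℝ) :=
  {g | ∃ b ∈ B, g = b ∘ f}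

/-- `μ(ℬ) = {(μ(H · b_ε))_ε ∣ H > 0, b ∈ ℬ}`. -/
def muAG {I : Type} (mu : ℝ → ℝ) (B : Set (I → ℝ)) : Set (I → ℝ) :=
  {g | ∃ H : ℝ, 0 < H ∧ ∃ b ∈ B, g = fun ε => mu (H * b ε)}

/-!
A moderate net `x` of an asymptotic gauge `ℬ` is eventually dominated by a member of `ℬ`: if
`x = O(c)` with `c ∈ ℬ`, take `s ∈ ℬ` with `|c| + |i| = O(s)` for some `i ∈ ℬ` tending to `+∞`;
then `|s| → +∞`, so `c = O(s) = o(s²)`, and `s²` is in turn `O(s₂)` for some positive `s₂ ∈ ℬ`.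
Hence `x = o(s₂)` and `x <_𝕀 s₂`. For `H · b` with `b ∈ ℬ₁` this gives `s ∈ ℬ₂` with
`H · b <_𝕀 s`, and monotonicity of `μ` turns it into `μ(H · b) ≤ μ(s)` eventually.
-/

open Filter Asymptotics

namespace SoI

variable {I : Type} (S : SoI I)

def smallFilter (A : Set I) (a : I) : Filter I :=
  ⨅ e ∈ S.down A a, 𝓟 (S.down A e)

theorem hasBasis_smallFilter {A : Set I} (hA : A ∈ S.sets) {a : I} (ha : a ∈ A) :
    (S.smallFilter A a).HasBasis (· ∈ S.down A a) (S.down A) := by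
  refine hasBasis_biInf_principal (fun e₁ he₁ e₂ he₂ => ?_) ⟨a, ha, S.refl a⟩
  obtain ⟨d, hdA, hda, ⟨hd₁, -⟩, hd₂, -⟩ :=
    (S.directed a a A hA ha (S.refl a)).2 e₁ e₂ he₁.1 he₁.2 he₂.1 he₂.2
  exact ⟨d, ⟨hdA, hda⟩, fun ε hε => ⟨hε.1, S.trans _ _ _ hε.2 hd₁⟩,
    fun ε hε => ⟨hε.1, S.trans _ _ _ hε.2 hd₂⟩⟩

theorem evSmallOn_iff {A : Set I} (hA : A ∈ S.sets) {a : I} (ha : a ∈ A) {P : I → Prop} :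
    EvSmallOn S A a P ↔ ∀ᶠ ε in S.smallFilter A a, P ε := by
  simp only [(S.hasBasis_smallFilter hA ha).eventually_iff, EvSmallOn]

theorem smallFilter_mono {A C : Set I} (hC : C ∈ S.sets) (hCA : C ⊆ A) {a : I} (ha : a ∈ C) :
    S.smallFilter C a ≤ S.smallFilter A a := by
  refine le_iInf₂ fun e he => le_principal_iff.2 ?_
  obtain ⟨x, hxC, hxe⟩ := (S.directed e a C hC ha he.2).1
  exact mem_iInf_of_mem x <| mem_iInf_of_mem ⟨hxC, S.trans _ _ _ hxe he.2⟩ <|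
    mem_principal.2 fun ε hε => ⟨hCA hε.1, S.trans _ _ _ hε.2 hxe⟩

/-- Packages the pattern `∃ A ∈ 𝓘, ∀ a ∈ A, …` of `EvSmall` and `BigO` (whose constants may
depend on `a`) as a filter on filters, so that such statements combine by `filter_upwards`. -/
def smallFilters : Filter (Filter I) where
  sets := {T | ∃ A ∈ S.sets, ∀ a ∈ A, Set.Iic (S.smallFilter A a) ⊆ T}
  univ_sets := ⟨Set.univ, S.univ_mem, fun _ _ => Set.subset_univ _⟩
  sets_of_superset := fun ⟨A, hA, hT⟩ hTU => ⟨A, hA, fun a ha => (hT a ha).trans hTU⟩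
  inter_sets := by
    rintro T U ⟨A, hA, hT⟩ ⟨B, hB, hU⟩
    obtain ⟨C, hC, hCAB⟩ := S.inter A hA B hB
    refine ⟨C, hC, fun a ha G hG => ⟨hT a (hCAB ha).1 ?_, hU a (hCAB ha).2 ?_⟩⟩
    · exact hG.trans (S.smallFilter_mono hC (fun ε hε => (hCAB hε).1) ha)
    · exact hG.trans (S.smallFilter_mono hC (fun ε hε => (hCAB hε).2) ha)

theorem eventually_smallFilters_iff {p : Filter I → Prop} (hp : Antitone p) :
    (∀ᶠ F in S.smallFilters, p F) ↔ ∃ A ∈ S.sets, ∀ a ∈ A, p (S.smallFilter A a) :=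
  exists_congr fun _ => and_congr_right fun _ => forall₂_congr fun _ _ =>
    ⟨fun h => h Set.self_mem_Iic, fun h _ hG => hp hG h⟩

end SoI

variable {I : Type} {S : SoI I}

theorem evSmall_iff_eventually {P : I → Prop} :
    EvSmall S P ↔ ∀ᶠ F in S.smallFilters, ∀ᶠ ε in F, P ε := by
  rw [S.eventually_smallFilters_iff fun _ _ hFG h => h.filter_mono hFG]
  exact exists_congr fun A => and_congr_right fun hA => forall₂_congr fun a ha =>
    S.evSmallOn_iff hA ha

theorem bigO_iff_eventually {x y : I → ℝ} :
    BigO S x y ↔ ∀ᶠ F in S.smallFilters, x =O[F] y := by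
  rw [S.eventually_smallFilters_iff fun _ _ hFG h => h.mono hFG]
  refine exists_congr fun A => and_congr_right fun hA => forall₂_congr fun a ha => ?_
  simp only [BigOOn, isBigO_iff', Real.norm_eq_abs, ← S.evSmallOn_iff hA ha]
  rfl

theorem LimTop.eventually_tendsto {i : I → ℝ} (h : LimTop S i) :
    ∀ᶠ F in S.smallFilters, Tendsto i F atTop := by
  obtain ⟨A, hA, hi⟩ := h
  refine (S.eventually_smallFilters_iff fun _ _ hFG h => h.mono_left hFG).2
    ⟨A, hA, fun a ha => tendsto_atTop.2 fun M => ?_⟩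
  obtain ⟨e, hea, hM⟩ := hi a ha M
  obtain ⟨x, hxA, hxe⟩ := (S.directed e a A hA ha hea).1
  exact (S.evSmallOn_iff hA ha).1 ⟨x, ⟨hxA, S.trans _ _ _ hxe hea⟩,
    fun ε hε => (hM ε hε.1 (S.trans _ _ _ hε.2 hxe)).le⟩

theorem bigO_refl (x : I → ℝ) : BigO S x x :=
  bigO_iff_eventually.2 (univ_mem' fun F => isBigO_refl x F)

theorem BigO.const_mul_left {x y : I → ℝ} (h : BigO S x y) (r : ℝ) :
    BigO S (fun ε => r * x ε) y :=
  bigO_iff_eventually.2 ((bigO_iff_eventually.1 h).mono fun _ h => h.const_mul_left r)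

theorem BigO.trans_abs_le {x y z : I → ℝ} (hxy : BigO S x y)
    (hyz : EvSmall S fun ε => |y ε| ≤ |z ε|) : BigO S x z := by
  refine bigO_iff_eventually.2 ?_
  filter_upwards [bigO_iff_eventually.1 hxy, evSmall_iff_eventually.1 hyz] with F hxy hyz
  exact hxy.trans (IsBigO.of_bound' hyz)

theorem EvSmall.mono {P Q : I → Prop} (h : EvSmall S P) (hPQ : ∀ ε, P ε → Q ε) :
    EvSmall S Q :=
  evSmall_iff_eventually.2 ((evSmall_iff_eventually.1 h).mono fun _ hP => hP.mono hPQ)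

theorem isBigO_abs_add_abs_left {α : Type*} (x y : α → ℝ) (F : Filter α) :
    x =O[F] fun ε => |x ε| + |y ε| :=
  IsBigO.of_bound' <| Eventually.of_forall fun ε => by
    rw [Real.norm_eq_abs, Real.norm_of_nonneg (by positivity)]
    exact le_add_of_nonneg_right (abs_nonneg _)

theorem isBigO_abs_add_abs_right {α : Type*} (x y : α → ℝ) (F : Filter α) :
    y =O[F] fun ε => |x ε| + |y ε| := by
  simpa only [add_comm] using isBigO_abs_add_abs_left y x F

theorem eventually_lt_of_isLittleO {α : Type*} {F : Filter α} {x s : α → ℝ} (hxs : x =o[F] s)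
    (hs : ∀ᶠ ε in F, 0 < s ε) : ∀ᶠ ε in F, x ε < s ε := by
  filter_upwards [hxs.bound one_half_pos, hs] with ε hxs hs
  rw [Real.norm_eq_abs, Real.norm_eq_abs, abs_of_pos hs] at hxs
  linarith [le_abs_self (x ε)]

namespace IsAG

variable {B : Set (I → ℝ)} (hB : IsAG S B)
include hB

theorem exists_isBigO_tendsto_norm {c : I → ℝ} (hc : c ∈ B) : ∃ s ∈ B,
    ∀ᶠ F in S.smallFilters, c =O[F] s ∧ Tendsto (fun ε => ‖s ε‖) F atTop := by
  obtain ⟨⟨i, hi, hiTop⟩, -, -, hsum⟩ := hB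
  obtain ⟨s, hs, -, hcis⟩ := hsum c hc i hi
  refine ⟨s, hs, ?_⟩
  filter_upwards [bigO_iff_eventually.1 hcis, hiTop.eventually_tendsto] with F hcis hiTop
  exact ⟨(isBigO_abs_add_abs_left c i F).trans hcis,
    ((isBigO_abs_add_abs_right c i F).trans hcis).trans_tendsto_norm_atTop
      (tendsto_norm_atTop_atTop.comp hiTop)⟩

theorem exists_netGt_zero_isLittleO {c : I → ℝ} (hc : c ∈ B) :
    ∃ t ∈ B, NetGt S t 0 ∧ ∀ᶠ F in S.smallFilters, c =o[F] t := by
  obtain ⟨s, hs, hcs⟩ := hB.exists_isBigO_tendsto_norm hc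
  obtain ⟨-, hmul, -, hsum⟩ := hB
  obtain ⟨p, hp, hssp⟩ := hmul s hs s hs
  obtain ⟨t, ht, htpos, hppt⟩ := hsum p hp p hp
  refine ⟨t, ht, htpos, ?_⟩
  filter_upwards [hcs, bigO_iff_eventually.1 hssp, bigO_iff_eventually.1 hppt]
    with F ⟨hcs, hs⟩ hssp hppt
  have hs_sq : s =o[F] fun ε => s ε * s ε := by
    simpa using (isBigO_refl s F).mul_isLittleO ((isLittleO_one_left_iff ℝ).2 hs)
  exact hcs.trans_isLittleO <| hs_sq.trans_isBigO <|
    hssp.trans <| (isBigO_abs_add_abs_left p p F).trans hppt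

theorem exists_netGt_of_mem_RM {x : I → ℝ} (hx : x ∈ RM S B) : ∃ t ∈ B, NetGt S t x := by
  obtain ⟨c, hc, hxc⟩ := hx
  obtain ⟨t, ht, htpos, hct⟩ := hB.exists_netGt_zero_isLittleO hc
  refine ⟨t, ht, evSmall_iff_eventually.2 ?_⟩
  filter_upwards [bigO_iff_eventually.1 hxc, evSmall_iff_eventually.1 htpos, hct]
    with F hxc htpos hct
  exact eventually_lt_of_isLittleO (hxc.trans_isLittleO hct) htpos

end IsAG

theorem RM_muAG_mono_general {I : Type} (S : SoI I) (B₁ B₂ : Set (I → ℝ))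
    (hB₂ : IsAG S B₂)
    (mu : ℝ → ℝ) (h0 : ∀ x, 0 ≤ mu x) (hmono : Monotone mu)
    (hsub : RM S B₁ ⊆ RM S B₂) :
    RM S (muAG mu B₁) ⊆ RM S (muAG mu B₂) := by
  rintro x ⟨_, ⟨H, -, b, hb, rfl⟩, hx⟩
  obtain ⟨s, hs, hbs⟩ :=
    hB₂.exists_netGt_of_mem_RM (hsub ⟨b, hb, (bigO_refl b).const_mul_left H⟩)
  refine ⟨fun ε => mu (1 * s ε), ⟨1, one_pos, s, hs, rfl⟩, hx.trans_abs_le (hbs.mono ?_)⟩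
  intro ε hε
  rw [abs_of_nonneg (h0 _), abs_of_nonneg (h0 _), one_mul]
  exact hmono hε.le

/-- If `ℝ_M(ℬ₁) ⊆ ℝ_M(ℬ₂)` then `ℝ_M(μ(ℬ₁)) ⊆ ℝ_M(μ(ℬ₂))`. -/
theorem RM_muAG_mono {I : Type} (S : SoI I) (B₁ B₂ : Set (I → ℝ))
    (hB₁ : IsAG S B₁) (hB₂ : IsAG S B₂)
    (mu : ℝ → ℝ) (h0 : ∀ x, 0 ≤ mu x) (hmono : Monotone mu)
    (htop : Filter.Tendsto mu Filter.atTop Filter.atTop)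
    (hsq₁ : ∀ b ∈ B₁, ∃ c ∈ B₁,
      NetGt S (fun ε => mu (c ε)) (fun ε => (mu (b ε)) ^ 2))
    (hsq₂ : ∀ b ∈ B₂, ∃ c ∈ B₂,
      NetGt S (fun ε => mu (c ε)) (fun ε => (mu (b ε)) ^ 2))
    (hsub : RM S B₁ ⊆ RM S B₂) :
    RM S (muAG mu B₁) ⊆ RM S (muAG mu B₂) :=
  RM_muAG_mono_general S B₁ B₂ hB₂ mu h0 hmono hsub
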